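/- arXiv:2008.13010 — 2 statements merged into one kernel-verified Lean document; each statement's English description precedes it below -/
import Mathlib

section
/- Let A ∈ ℝ^{n×n} and B ∈ ℝ^{n×m} be such that there exists K ∈ ℝ^{m×n} with (A+BK)^k → 0 as k → ∞, let 𝒞 ⊆ ℝ^{n+m} be a proper C-set, and let 𝒬_f ⊆ ℝⁿ be a proper C-set. Then there exists a proper C-set ℒ ⊆ ℝⁿ with ℒ ⊆ 𝒬_f verifying the control Lyapunov decrease condition: for every x ∈ ℝⁿ there exists u ∈ ℝᵐ such that γ(ℒ, Ax+Bu) + γ(𝒞, (x,u)) ≤ γ(ℒ, x). -/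
/-! With a stabilizing feedback `u = K x` and closed loop `T = A + B K`, the stage cost
`g x = γ(𝒞, (x, K x))` is sublinear and comparable to the norm. Since `T ^ k → 0`, the norms
`‖T ^ k‖` are summable, so the closed-loop cost `V x = ∑ₖ g (T ^ k x)` is again sublinear and
comparable to the norm, and `V x = g x + V (T x)`. A sublevel set `ℒ = {V ≤ ε}` is then a proper
C-set with gauge `V / ε`; taking `ε ≤ 1` turns the recursion into the decrease condition, and
taking `ε` small puts `ℒ` inside `𝒬_f`. -/

open Pointwise Filter Topology Matrix

noncomputable section

/-- ℝⁿ with the standard (Euclidean) inner product. -/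
abbrev Rsp (n : ℕ) := EuclideanSpace ℝ (Fin n)

/-- ℝ^{n+m} realized as the L²-product ℝⁿ × ℝᵐ. -/
abbrev Rsp2 (n m : ℕ) := WithLp 2 (Rsp n × Rsp m)

/-- A C-set: compact, convex, containing the origin. -/
def IsCSet {E : Type*} [NormedAddCommGroup E] [NormedSpace ℝ E] (X : Set E) : Prop :=
  IsCompact X ∧ Convex ℝ X ∧ (0 : E) ∈ X

/-- A proper C-set: a C-set containing the origin in its interior. -/
def IsProperCSet {E : Type*} [NormedAddCommGroup E] [NormedSpace ℝ E] (X : Set E) : Prop :=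
  IsCSet X ∧ (0 : E) ∈ interior X

/-- The polar set 𝒳* = {y : ⟨y,x⟩ ≤ 1 for all x ∈ 𝒳}. -/
def polarSet {E : Type*} [NormedAddCommGroup E] [InnerProductSpace ℝ E] (X : Set E) : Set E :=
  {y | ∀ x ∈ X, inner ℝ y x ≤ (1 : ℝ)}

/-- The Minkowski (gauge) function γ(𝒳,y) = inf{η ≥ 0 : y ∈ η𝒳}. -/
def mgauge {E : Type*} [NormedAddCommGroup E] [NormedSpace ℝ E] (X : Set E) (y : E) : ℝ :=
  sInf {η : ℝ | 0 ≤ η ∧ y ∈ η • X}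

variable {n m : ℕ}

/-- The map M = (A B) : ℝ^{n+m} → ℝⁿ, M(x,u) = Ax + Bu. -/
def Mfwd (A : Matrix (Fin n) (Fin n) ℝ) (B : Matrix (Fin n) (Fin m) ℝ) (w : Rsp2 n m) : Rsp n :=
  Matrix.toEuclideanLin A w.ofLp.1 + Matrix.toEuclideanLin B w.ofLp.2

/-- The transpose map Mᵀ : ℝⁿ → ℝ^{n+m}, Mᵀp = (Aᵀp, Bᵀp). -/
def Mtr (A : Matrix (Fin n) (Fin n) ℝ) (B : Matrix (Fin n) (Fin m) ℝ) (p : Rsp n) : Rsp2 n m :=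
  WithLp.toLp 2 (Matrix.toEuclideanLin Aᵀ p, Matrix.toEuclideanLin Bᵀ p)

/-- The projection P_x : ℝ^{n+m} → ℝⁿ, (x,u) ↦ x. -/
def Pxproj : Rsp2 n m → Rsp n := fun w => w.ofLp.1

theorem mgauge_eq_gauge {E : Type*} [NormedAddCommGroup E] [NormedSpace ℝ E] {X : Set E}
    (h0 : (0 : E) ∈ X) (y : E) : mgauge X y = gauge X y := by
  have hzero : (0 : ℝ) • X = {0} := Set.zero_smul_set ⟨0, h0⟩
  rcases eq_or_ne y 0 with rfl | hy
  · rw [gauge_zero]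
    exact le_antisymm (csInf_le ⟨0, fun _ hη => hη.1⟩ ⟨le_rfl, by rw [hzero]; rfl⟩)
      (le_csInf ⟨0, le_rfl, by rw [hzero]; rfl⟩ fun _ hη => hη.1)
  · unfold mgauge gauge
    congr 1
    ext η
    refine ⟨fun ⟨hη, hy'⟩ => ⟨hη.lt_of_ne ?_, hy'⟩, fun ⟨hη, hy'⟩ => ⟨hη.le, hy'⟩⟩
    rintro rfl
    rw [hzero] at hy'
    exact hy hy'

theorem summable_norm_pow_of_tendsto_zero {R : Type*} [NormedRing R] {a : R}
    (h : Tendsto (fun k : ℕ => a ^ k) atTop (𝓝 0)) : Summable fun k : ℕ => ‖a ^ k‖ := by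
  obtain ⟨N, hN⟩ := (h.norm.eventually_lt_const (by simp : ‖(0 : R)‖ < 1)).exists_forall_of_atTop
  have hcontr : ‖a ^ (N + 1)‖ < 1 := hN _ N.le_succ
  -- split `k = q (N + 1) + j` with `j ≤ N`, and bound `‖a ^ k‖ ≤ ‖a ^ (N + 1)‖ ^ q ‖a ^ j‖`
  rw [← (Nat.divModEquiv (N + 1)).symm.summable_iff]
  refine .of_nonneg_of_le (fun _ => norm_nonneg _) (fun p => ?_)
    ((summable_geometric_of_lt_one (norm_nonneg _) hcontr).mul_of_nonneg
      (g := fun j : Fin (N + 1) => ‖a ^ (j : ℕ)‖) .of_finite (fun _ => by positivity)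
      fun _ => norm_nonneg _)
  obtain ⟨q, j⟩ := p
  simp only [Function.comp_apply, Nat.divModEquiv_symm_apply, pow_add, mul_comm q, pow_mul]
  rcases q with _ | q
  · simp
  · exact (norm_mul_le _ _).trans
      (mul_le_mul_of_nonneg_right (norm_pow_le' _ q.succ_pos) (norm_nonneg _))

theorem lipschitzWith_of_subadditive {E : Type*} [NormedAddCommGroup E] {f : E → ℝ} {c : ℝ}
    (hadd : ∀ x y, f (x + y) ≤ f x + f y) (hle : ∀ x, f x ≤ c * ‖x‖) : LipschitzWith c.toNNReal f :=
  LipschitzWith.of_le_add_mul _ fun x y =>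
    calc f x = f (y + (x - y)) := by rw [add_sub_cancel]
      _ ≤ f y + f (x - y) := hadd _ _
      _ ≤ f y + c * ‖x - y‖ := add_le_add_right (hle _) _
      _ ≤ f y + c.toNNReal * dist x y := by
        rw [dist_eq_norm]; gcongr; exact Real.le_coe_toNNReal c

theorem setOf_le_subset_closedBall {E : Type*} [NormedAddCommGroup E] {f : E → ℝ} {b : ℝ}
    (hb : 0 < b) (hlow : ∀ x, b * ‖x‖ ≤ f x) (ε : ℝ) :
    {x | f x ≤ ε} ⊆ Metric.closedBall 0 (ε / b) := fun x (hx : f x ≤ ε) => by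
  rw [mem_closedBall_zero_iff, le_div_iff₀ hb, mul_comm]
  exact (hlow x).trans hx

section Sublinear

variable {E : Type*} [NormedAddCommGroup E] [NormedSpace ℝ E] {f : E → ℝ}

theorem gauge_setOf_le (hf_nonneg : ∀ x, 0 ≤ f x)
    (hsmul : ∀ a : ℝ, 0 ≤ a → ∀ x, f (a • x) = a * f x) {ε : ℝ} (hε : 0 < ε) (x : E) :
    gauge {y | f y ≤ ε} x = f x / ε := by
  have hmem : ∀ r > 0, x ∈ r • {y | f y ≤ ε} ↔ f x / ε ≤ r := fun r hr => by
    rw [Set.mem_smul_set_iff_inv_smul_mem₀ hr.ne', Set.mem_ofPred_eq, hsmul _ (inv_nonneg.2 hr.le),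
      inv_mul_le_iff₀ hr, div_le_iff₀ hε, mul_comm]
  have hpos : ∀ δ > 0, 0 < f x / ε + δ := fun δ hδ => by positivity [hf_nonneg x]
  refine le_antisymm (le_of_forall_pos_lt_add fun δ hδ => ?_) ?_
  · refine (gauge_le_of_mem (hpos (δ / 2) (half_pos hδ)).le ?_).trans_lt (by linarith)
    exact (hmem _ (hpos _ (half_pos hδ))).2 (by linarith)
  · exact le_csInf ⟨_, hpos 1 one_pos, (hmem _ (hpos 1 one_pos)).2 (by linarith)⟩
      fun r ⟨hr, hxr⟩ => (hmem r hr).1 hxr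

theorem convex_setOf_le_of_subadditive (hadd : ∀ x y, f (x + y) ≤ f x + f y)
    (hsmul : ∀ a : ℝ, 0 ≤ a → ∀ x, f (a • x) = a * f x) (ε : ℝ) :
    Convex ℝ {x | f x ≤ ε} := by
  intro x (hx : f x ≤ ε) y (hy : f y ≤ ε) a b ha hb hab
  calc f (a • x + b • y) ≤ a * f x + b * f y := by
        grw [hadd, hsmul a ha, hsmul b hb]
    _ ≤ a * ε + b * ε := by gcongr
    _ = ε := by rw [← add_mul, hab, one_mul]

theorem isProperCSet_setOf_le [ProperSpace E] (hadd : ∀ x y, f (x + y) ≤ f x + f y)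
    (hsmul : ∀ a : ℝ, 0 ≤ a → ∀ x, f (a • x) = a * f x) {b c : ℝ} (hb : 0 < b)
    (hlow : ∀ x, b * ‖x‖ ≤ f x) (hup : ∀ x, f x ≤ c * ‖x‖) {ε : ℝ} (hε : 0 < ε) :
    IsProperCSet {x | f x ≤ ε} := by
  have hcont : Continuous f := (lipschitzWith_of_subadditive hadd hup).continuous
  have hf_zero : f 0 = 0 := by simpa using hsmul 0 le_rfl 0
  refine ⟨⟨(isCompact_closedBall 0 (ε / b)).of_isClosed_subset
      (isClosed_le hcont continuous_const) (setOf_le_subset_closedBall hb hlow ε),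
    convex_setOf_le_of_subadditive hadd hsmul ε, hf_zero.trans_le hε.le⟩, ?_⟩
  rw [mem_interior_iff_mem_nhds]
  exact mem_of_superset ((isOpen_lt hcont continuous_const).mem_nhds (hf_zero.trans_lt hε))
    fun x (hx : f x < ε) => show f x ≤ ε from hx.le

end Sublinear

section OrbitSum

variable {E : Type*} [NormedAddCommGroup E] [NormedSpace ℝ E] (T : E →L[ℝ] E) {g : E → ℝ}

def orbitSum (g : E → ℝ) (x : E) : ℝ := ∑' k : ℕ, g ((T ^ k) x)

variable {T}

theorem orbit_term_le {c : ℝ} (hc : 0 ≤ c) (hup : ∀ x, g x ≤ c * ‖x‖) (k : ℕ) (x : E) :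
    g ((T ^ k) x) ≤ c * ‖x‖ * ‖T ^ k‖ :=
  calc g ((T ^ k) x) ≤ c * (‖T ^ k‖ * ‖x‖) := (hup _).trans (by gcongr; exact (T ^ k).le_opNorm x)
    _ = c * ‖x‖ * ‖T ^ k‖ := by ring

theorem summable_orbit (hT : Summable fun k : ℕ => ‖T ^ k‖) (hg_nonneg : ∀ x, 0 ≤ g x) {c : ℝ}
    (hc : 0 ≤ c) (hup : ∀ x, g x ≤ c * ‖x‖) (x : E) : Summable fun k : ℕ => g ((T ^ k) x) :=
  .of_nonneg_of_le (fun _ => hg_nonneg _) (fun k => orbit_term_le hc hup k x)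
    (hT.mul_left (c * ‖x‖))

theorem orbitSum_le (hT : Summable fun k : ℕ => ‖T ^ k‖) (hg_nonneg : ∀ x, 0 ≤ g x) {c : ℝ}
    (hc : 0 ≤ c) (hup : ∀ x, g x ≤ c * ‖x‖) (x : E) :
    orbitSum T g x ≤ c * (∑' k : ℕ, ‖T ^ k‖) * ‖x‖ :=
  calc orbitSum T g x ≤ ∑' k : ℕ, c * ‖x‖ * ‖T ^ k‖ :=
        (summable_orbit hT hg_nonneg hc hup x).tsum_le_tsum (orbit_term_le hc hup · x)
          (hT.mul_left _)
    _ = c * (∑' k : ℕ, ‖T ^ k‖) * ‖x‖ := by rw [tsum_mul_left]; ring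

theorem le_orbitSum (hg_nonneg : ∀ x, 0 ≤ g x) {x : E} (hs : Summable fun k : ℕ => g ((T ^ k) x)) :
    g x ≤ orbitSum T g x := by
  simpa only [orbitSum, pow_zero, one_apply_eq_self] using hs.le_tsum 0 fun k _ => hg_nonneg _

theorem orbitSum_eq_add {x : E} (hs : Summable fun k : ℕ => g ((T ^ k) x)) :
    orbitSum T g x = g x + orbitSum T g (T x) := by
  simp only [orbitSum, hs.tsum_eq_zero_add, pow_succ, pow_zero, mul_apply_eq_comp,
    one_apply_eq_self]

theorem orbitSum_smul (hsmul : ∀ a : ℝ, 0 ≤ a → ∀ x, g (a • x) = a * g x) {a : ℝ} (ha : 0 ≤ a)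
    (x : E) : orbitSum T g (a • x) = a * orbitSum T g x := by
  simp only [orbitSum, map_smul, hsmul a ha, tsum_mul_left]

theorem orbitSum_add_le (hadd : ∀ x y, g (x + y) ≤ g x + g y) {x y : E}
    (hx : Summable fun k : ℕ => g ((T ^ k) x)) (hy : Summable fun k : ℕ => g ((T ^ k) y))
    (hxy : Summable fun k : ℕ => g ((T ^ k) (x + y))) :
    orbitSum T g (x + y) ≤ orbitSum T g x + orbitSum T g y := by
  rw [orbitSum, orbitSum, orbitSum, ← hx.tsum_add hy]
  exact hxy.tsum_le_tsum (fun k => by rw [map_add]; exact hadd _ _) (hx.add hy)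

end OrbitSum

theorem exists_isProperCSet_gauge_add_le {E : Type*} [NormedAddCommGroup E] [NormedSpace ℝ E]
    [ProperSpace E] {T : E →L[ℝ] E} (hT : Summable fun k : ℕ => ‖T ^ k‖) {g : E → ℝ}
    (hadd : ∀ x y, g (x + y) ≤ g x + g y) (hsmul : ∀ a : ℝ, 0 ≤ a → ∀ x, g (a • x) = a * g x)
    {b c : ℝ} (hb : 0 < b) (hc : 0 ≤ c) (hlow : ∀ x, b * ‖x‖ ≤ g x) (hup : ∀ x, g x ≤ c * ‖x‖)
    {Q : Set E} (hQ : Q ∈ 𝓝 0) :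
    ∃ L : Set E, IsProperCSet L ∧ L ⊆ Q ∧ ∀ x, gauge L (T x) + g x ≤ gauge L x := by
  have hg_nonneg (x : E) : 0 ≤ g x := (mul_nonneg hb.le (norm_nonneg x)).trans (hlow x)
  have hsum := summable_orbit hT hg_nonneg hc hup
  have hV_nonneg (x : E) : 0 ≤ orbitSum T g x := tsum_nonneg fun _ => hg_nonneg _
  have hV_low (x : E) : b * ‖x‖ ≤ orbitSum T g x := (hlow x).trans (le_orbitSum hg_nonneg (hsum x))
  have hV_smul (a : ℝ) (ha : 0 ≤ a) (x : E) := orbitSum_smul (T := T) hsmul ha x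
  obtain ⟨r, hr, hrQ⟩ := Metric.nhds_basis_closedBall.mem_iff.1 hQ
  -- `ε ≤ 1` lets the stage cost `g x` be absorbed into `g x / ε`
  set ε := min 1 (b * r)
  have hε : 0 < ε := lt_min one_pos (mul_pos hb hr)
  have hεr : ε / b ≤ r := by rw [div_le_iff₀ hb, mul_comm]; exact min_le_right _ _
  refine ⟨{x | orbitSum T g x ≤ ε},
    isProperCSet_setOf_le (fun x y => orbitSum_add_le hadd (hsum x) (hsum y) (hsum (x + y)))
      hV_smul hb hV_low (orbitSum_le hT hg_nonneg hc hup) hε,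
    (setOf_le_subset_closedBall hb hV_low ε).trans
      ((Metric.closedBall_subset_closedBall hεr).trans hrQ), fun x => ?_⟩
  rw [gauge_setOf_le hV_nonneg hV_smul hε, gauge_setOf_le hV_nonneg hV_smul hε,
    orbitSum_eq_add (hsum x), add_div, add_comm (g x / ε)]
  gcongr
  exact le_div_self (hg_nonneg x) hε (min_le_left _ _)

theorem exists_isProperCSet_gauge_add_gauge_le {E F : Type*} [NormedAddCommGroup E]
    [NormedSpace ℝ E] [ProperSpace E] [NormedAddCommGroup F] [NormedSpace ℝ F] {T : E →L[ℝ] E}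
    (hT : Summable fun k : ℕ => ‖T ^ k‖) (J : E →L[ℝ] F) (hJ : ∀ x, ‖x‖ ≤ ‖J x‖) {C : Set F}
    (hC : IsProperCSet C) {Q : Set E} (hQ : Q ∈ 𝓝 0) :
    ∃ L : Set E, IsProperCSet L ∧ L ⊆ Q ∧ ∀ x, gauge L (T x) + gauge C (J x) ≤ gauge L x := by
  obtain ⟨⟨hCcomp, hCconv, -⟩, hCint⟩ := hC
  obtain ⟨δ, hδ, hδC⟩ := Metric.mem_nhds_iff.1 (mem_interior_iff_mem_nhds.1 hCint)
  have hCabs : Absorbent ℝ C := (absorbent_ball_zero hδ).mono hδC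
  obtain ⟨R, hR, hCR⟩ := hCcomp.isBounded.subset_closedBall_lt 0 0
  refine exists_isProperCSet_gauge_add_le hT (g := fun x => gauge C (J x)) (c := ‖J‖ / δ)
    (fun x y => ?_) (fun a ha x => ?_) (inv_pos.2 hR) (by positivity) (fun x => ?_) (fun x => ?_) hQ
  · rw [map_add]
    exact gauge_add_le hCconv hCabs _ _
  · rw [map_smul, gauge_smul_of_nonneg ha, smul_eq_mul]
  · calc R⁻¹ * ‖x‖ ≤ ‖J x‖ / R := by rw [inv_mul_eq_div]; gcongr; exact hJ x
      _ ≤ gauge C (J x) := le_gauge_of_subset_closedBall hCabs hR.le hCR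
  · rw [div_mul_eq_mul_div, le_div_iff₀ hδ, mul_comm]
    exact (mul_gauge_le_norm hδC).trans (J.le_opNorm x)

def feedbackGraph (K : Matrix (Fin m) (Fin n) ℝ) : Rsp n →L[ℝ] Rsp2 n m :=
  (WithLp.prodContinuousLinearEquiv 2 ℝ (Rsp n) (Rsp m)).symm.toContinuousLinearMap ∘L
    (ContinuousLinearMap.id ℝ (Rsp n)).prod (Matrix.toEuclideanLin K).toContinuousLinearMap

theorem feedbackGraph_apply (K : Matrix (Fin m) (Fin n) ℝ) (x : Rsp n) :
    feedbackGraph K x = WithLp.toLp 2 (x, Matrix.toEuclideanLin K x) :=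
  rfl

theorem Mfwd_feedbackGraph (A : Matrix (Fin n) (Fin n) ℝ) (B : Matrix (Fin n) (Fin m) ℝ)
    (K : Matrix (Fin m) (Fin n) ℝ) (x : Rsp n) :
    Mfwd A B (feedbackGraph K x) = Matrix.toEuclideanCLM (𝕜 := ℝ) (A + B * K) x := by
  rw [Mfwd, feedbackGraph_apply, ← ContinuousLinearMap.coe_coe,
    Matrix.coe_toEuclideanCLM_eq_toEuclideanLin]
  simp [Matrix.toLpLin_apply, Matrix.mulVec_mulVec]

theorem tendsto_toEuclideanCLM_pow {M : Matrix (Fin n) (Fin n) ℝ}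
    (h : Tendsto (fun k : ℕ => M ^ k) atTop (𝓝 0)) :
    Tendsto (fun k : ℕ => Matrix.toEuclideanCLM (𝕜 := ℝ) M ^ k) atTop (𝓝 0) := by
  have hcont := LinearMap.continuous_of_finiteDimensional
    (Matrix.toEuclideanCLM (𝕜 := ℝ) (n := Fin n)).toAlgEquiv.toLinearMap
  simpa [Function.comp_def, ← map_pow] using (hcont.tendsto 0).comp h

/-- under strict stabilizability, a Lyapunov proper C-set ℒ can be
chosen inside a given proper C-set 𝒬_f. -/
theorem stmt_8 (n m : ℕ) (A : Matrix (Fin n) (Fin n) ℝ) (B : Matrix (Fin n) (Fin m) ℝ)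
    (hstab : ∃ K : Matrix (Fin m) (Fin n) ℝ,
      Tendsto (fun k : ℕ => (A + B * K) ^ k) atTop (nhds 0))
    (C : Set (Rsp2 n m)) (hC : IsProperCSet C)
    (Qf : Set (Rsp n)) (hQf : IsProperCSet Qf) :
    ∃ L : Set (Rsp n), IsProperCSet L ∧ L ⊆ Qf ∧
      ∀ x : Rsp n, ∃ u : Rsp m,
        mgauge L (Mfwd A B (WithLp.toLp 2 (x, u))) + mgauge C (WithLp.toLp 2 (x, u) : Rsp2 n m) ≤ mgauge L x := by
  obtain ⟨K, hK⟩ := hstab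
  obtain ⟨L, hL, hLQ, hdecr⟩ := exists_isProperCSet_gauge_add_gauge_le
    (summable_norm_pow_of_tendsto_zero (tendsto_toEuclideanCLM_pow hK)) (feedbackGraph K)
    (fun x => WithLp.norm_fst_le _ (feedbackGraph K x)) hC (mem_interior_iff_mem_nhds.1 hQf.2)
  refine ⟨L, hL, hLQ, fun x => ⟨Matrix.toEuclideanLin K x, ?_⟩⟩
  rw [mgauge_eq_gauge hL.1.2.2, mgauge_eq_gauge hL.1.2.2, mgauge_eq_gauge hC.1.2.2,
    ← feedbackGraph_apply, Mfwd_feedbackGraph]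
  exact hdecr x

end
end

section
/- Let 𝒞 ⊆ ℝ^{n+m} be a proper C-set, let A ∈ ℝ^{n×n}, B ∈ ℝ^{n×m}, and let S ⊆ ℝⁿ be a C-set. Define the sequences 𝒯₁ = (𝒞* ⊕ MᵀS)*, 𝒫₁ = P_x𝒯₁, and for k ≥ 1, 𝒯_{k+1} = (𝒞* ⊕ Mᵀ𝒫_k*)*, 𝒫_{k+1} = P_x𝒯_{k+1}. Then for every k ≥ 1, 𝒯_k is a proper C-set in ℝ^{n+m} and 𝒫_k is a proper C-set in ℝⁿ. -/
/-! The polar of a bounded set with the origin in its interior is again such a set, and it is always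
closed and convex, so in finite dimension it is a proper C-set. Since `𝒞` is a proper C-set, `𝒞*`
already has the origin in its interior, and adding the bounded set `Mᵀ𝒲` (with `0 ∈ 𝒲`) keeps
the sum bounded with the origin inside; hence `(𝒞* ⊕ Mᵀ𝒲)*` is a proper C-set whenever `𝒲` is
compact and contains `0`. This applies to `𝒲 = S` and, inductively, to `𝒲 = 𝒫ₖ*`. Finally
`P_x` is a surjective linear map, hence open, so it maps proper C-sets to proper C-sets. -/

open Pointwise Filter Topology Matrix

noncomputable section

variable {n m : ℕ}

section Polar

variable {E : Type*} [NormedAddCommGroup E] [InnerProductSpace ℝ E]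

lemma zero_mem_polarSet (X : Set E) : (0 : E) ∈ polarSet X := by
  intro x _
  simp

lemma convex_polarSet (X : Set E) : Convex ℝ (polarSet X) := by
  intro y hy z hz a b ha hb hab x hx
  calc inner ℝ (a • y + b • z) x = a * inner ℝ y x + b * inner ℝ z x := by
        rw [inner_add_left, real_inner_smul_left, real_inner_smul_left]
    _ ≤ a * 1 + b * 1 := by gcongr <;> [exact hy x hx; exact hz x hx]
    _ = 1 := by rw [mul_one, mul_one, hab]

lemma isClosed_polarSet (X : Set E) : IsClosed (polarSet X) := by
  have : polarSet X = ⋂ x ∈ X, {y : E | inner ℝ y x ≤ (1 : ℝ)} := by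
    ext y
    simp [polarSet]
  rw [this]
  exact isClosed_biInter fun x _ => isClosed_le (by fun_prop) continuous_const

lemma polarSet_subset_closedBall {X : Set E} {ε : ℝ} (hε : 0 < ε)
    (hX : Metric.ball (0 : E) ε ⊆ X) : polarSet X ⊆ Metric.closedBall 0 (2 / ε) := by
  intro y hy
  rw [Metric.mem_closedBall, dist_zero_right, le_div_iff₀ hε]
  rcases eq_or_ne y 0 with rfl | hy0
  · simp
  have hny : 0 < ‖y‖ := norm_pos_iff.mpr hy0
  have hx : (ε / 2 / ‖y‖) • y ∈ X := hX <| by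
    rw [mem_ball_zero_iff, norm_smul, Real.norm_of_nonneg (by positivity),
      div_mul_cancel₀ _ hny.ne']
    linarith
  have h := hy _ hx
  rw [real_inner_smul_right, real_inner_self_eq_norm_sq] at h
  have : ε / 2 / ‖y‖ * ‖y‖ ^ 2 = ε / 2 * ‖y‖ := by field_simp
  linarith

lemma isBounded_polarSet {X : Set E} (hX : (0 : E) ∈ interior X) :
    Bornology.IsBounded (polarSet X) := by
  obtain ⟨ε, hε, hball⟩ := Metric.mem_nhds_iff.mp (mem_interior_iff_mem_nhds.mp hX)
  exact Metric.isBounded_closedBall.subset (polarSet_subset_closedBall hε hball)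

lemma ball_subset_polarSet {X : Set E} {R : ℝ} (hR : 0 < R)
    (hX : X ⊆ Metric.closedBall 0 R) : Metric.ball (0 : E) R⁻¹ ⊆ polarSet X := by
  intro y hy x hx
  rw [mem_ball_zero_iff] at hy
  have hxR : ‖x‖ ≤ R := mem_closedBall_zero_iff.mp (hX hx)
  calc inner ℝ y x ≤ ‖y‖ * ‖x‖ := real_inner_le_norm y x
    _ ≤ R⁻¹ * R := mul_le_mul hy.le hxR (norm_nonneg x) (by positivity)
    _ = 1 := inv_mul_cancel₀ hR.ne'

lemma zero_mem_interior_polarSet {X : Set E} (hX : Bornology.IsBounded X) :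
    (0 : E) ∈ interior (polarSet X) := by
  obtain ⟨r, hr⟩ := (Metric.isBounded_iff_subset_closedBall 0).mp hX
  have hR : 0 < max r 1 := lt_max_of_lt_right one_pos
  have hXR := hr.trans (Metric.closedBall_subset_closedBall (le_max_left r 1))
  refine interior_mono (ball_subset_polarSet hR hXR) ?_
  rw [Metric.isOpen_ball.interior_eq]
  exact Metric.mem_ball_self (inv_pos.mpr hR)

lemma isProperCSet_polarSet [ProperSpace E] {X : Set E} (hXb : Bornology.IsBounded X)
    (hX : (0 : E) ∈ interior X) : IsProperCSet (polarSet X) :=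
  ⟨⟨Metric.isCompact_of_isClosed_isBounded (isClosed_polarSet X) (isBounded_polarSet hX),
    convex_polarSet X, zero_mem_polarSet X⟩, zero_mem_interior_polarSet hXb⟩

lemma isProperCSet_polarSet_polarSet_add [ProperSpace E] {C K : Set E}
    (hCb : Bornology.IsBounded C) (hC : (0 : E) ∈ interior C)
    (hKb : Bornology.IsBounded K) (hK : (0 : E) ∈ K) :
    IsProperCSet (polarSet (polarSet C + K)) := by
  refine isProperCSet_polarSet ((isBounded_polarSet hC).add hKb) ?_
  have hsub : polarSet C ⊆ polarSet C + K := fun y hy => ⟨y, hy, 0, hK, add_zero y⟩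
  exact interior_mono hsub (zero_mem_interior_polarSet hCb)

end Polar

lemma IsProperCSet.image_of_surjective {E F : Type*} [NormedAddCommGroup E] [NormedSpace ℝ E]
    [CompleteSpace E] [NormedAddCommGroup F] [NormedSpace ℝ F] [CompleteSpace F]
    {T : Set E} (hT : IsProperCSet T) (f : E →L[ℝ] F) (hf : Function.Surjective f) :
    IsProperCSet (f '' T) := by
  obtain ⟨⟨hTc, hTconv, hT0⟩, hTint⟩ := hT
  refine ⟨⟨hTc.image f.continuous, hTconv.linear_image f.toLinearMap, 0, hT0, map_zero f⟩, ?_⟩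
  have hopen : IsOpen (f '' interior T) := f.isOpenMap hf _ isOpen_interior
  exact interior_maximal (Set.image_mono interior_subset) hopen ⟨0, hTint, map_zero f⟩

variable {n m : ℕ}

lemma continuous_Mtr (A : Matrix (Fin n) (Fin n) ℝ) (B : Matrix (Fin n) (Fin m) ℝ) :
    Continuous (Mtr A B) :=
  (WithLp.prod_continuous_toLp 2 _ _).comp
    ((Matrix.toEuclideanLin Aᵀ).continuous_of_finiteDimensional.prodMk
      (Matrix.toEuclideanLin Bᵀ).continuous_of_finiteDimensional)

lemma Mtr_zero (A : Matrix (Fin n) (Fin n) ℝ) (B : Matrix (Fin n) (Fin m) ℝ) :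
    Mtr A B 0 = 0 := by
  simp [Mtr]

def PxprojCLM : Rsp2 n m →L[ℝ] Rsp n :=
  (ContinuousLinearMap.fst ℝ (Rsp n) (Rsp m)).comp
    (WithLp.prodContinuousLinearEquiv 2 ℝ (Rsp n) (Rsp m)).toContinuousLinearMap

lemma coe_PxprojCLM : ⇑(PxprojCLM : Rsp2 n m →L[ℝ] Rsp n) = Pxproj := rfl

lemma Pxproj_surjective : Function.Surjective (Pxproj : Rsp2 n m → Rsp n) :=
  fun p => ⟨WithLp.toLp 2 (p, 0), rfl⟩

lemma IsProperCSet.image_Pxproj {T : Set (Rsp2 n m)} (hT : IsProperCSet T) :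
    IsProperCSet (Pxproj '' T) :=
  coe_PxprojCLM ▸ hT.image_of_surjective PxprojCLM Pxproj_surjective

lemma isProperCSet_polarSet_polarSet_add_image_Mtr {C : Set (Rsp2 n m)} (hC : IsProperCSet C)
    (A : Matrix (Fin n) (Fin n) ℝ) (B : Matrix (Fin n) (Fin m) ℝ)
    {W : Set (Rsp n)} (hW : IsCompact W) (hW0 : (0 : Rsp n) ∈ W) :
    IsProperCSet (polarSet (polarSet C + Mtr A B '' W)) :=
  isProperCSet_polarSet_polarSet_add hC.1.1.isBounded hC.2
    (hW.image (continuous_Mtr A B)).isBounded ⟨0, hW0, Mtr_zero A B⟩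

/-- the iterates 𝒯_k, 𝒫_k are proper C-sets. -/
theorem stmt_9 (n m : ℕ) (C : Set (Rsp2 n m)) (hC : IsProperCSet C)
    (A : Matrix (Fin n) (Fin n) ℝ) (B : Matrix (Fin n) (Fin m) ℝ)
    (S : Set (Rsp n)) (hS : IsCSet S)
    (T : ℕ → Set (Rsp2 n m)) (P : ℕ → Set (Rsp n))
    (hT0 : T 0 = polarSet (polarSet C + Mtr A B '' S))
    (hP0 : P 0 = Pxproj '' T 0)
    (hTs : ∀ k : ℕ, T (k + 1) = polarSet (polarSet C + Mtr A B '' polarSet (P k)))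
    (hPs : ∀ k : ℕ, P (k + 1) = Pxproj '' T (k + 1)) :
    ∀ k : ℕ, IsProperCSet (T k) ∧ IsProperCSet (P k) := by
  intro k
  induction k with
  | zero =>
    have hT : IsProperCSet (T 0) :=
      hT0 ▸ isProperCSet_polarSet_polarSet_add_image_Mtr hC A B hS.1 hS.2.2
    exact ⟨hT, hP0 ▸ hT.image_Pxproj⟩
  | succ k ih =>
    have hPk : IsProperCSet (polarSet (P k)) := isProperCSet_polarSet ih.2.1.1.isBounded ih.2.2
    have hT : IsProperCSet (T (k + 1)) :=
      hTs k ▸ isProperCSet_polarSet_polarSet_add_image_Mtr hC A B hPk.1.1 hPk.1.2.2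
    exact ⟨hT, hPs k ▸ hT.image_Pxproj⟩
end
end
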